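/- arXiv:2110.13200 — 3 statements merged into one kernel-verified Lean document; each statement's English description precedes it below -/
import Mathlib

section
/- Suppose the Gram matrix K_S^H K_S is invertible and the exact-recovery constant satisfies max_{j∉S} ‖(K_S^H K_S)^{-1} K_S^H k_j‖₁ < 1. Then every x ∈ ℂ^N that is supported on S is the unique ℓ1 minimizer for the observation y = Kx; that is, basis pursuit recovers x exactly even when the true support of x is only contained in (possibly strictly smaller than) S. -/
open Matrix Finset

noncomputable section

/-- The Hermitian inner product `⟨u,v⟩ = ∑ l, conj (u l) * v l` on `ℂ^L`. -/
def ipC {L : ℕ} (u v : Fin L → ℂ) : ℂ := ∑ l, star (u l) * v l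

/-- The `j`-th column `k_j` of the dictionary `K`. -/
def colK {L N : ℕ} (K : Matrix (Fin L) (Fin N) ℂ) (j : Fin N) : Fin L → ℂ := fun l => K l j

/-- The submatrix `K_S` of the columns of `K` indexed by `S`. -/
def subMat {L N : ℕ} (K : Matrix (Fin L) (Fin N) ℂ) (S : Finset (Fin N)) :
    Matrix (Fin L) {j : Fin N // j ∈ S} ℂ := Matrix.of fun l j => K l j.1

/-- The Gram matrix `K_Sᴴ K_S`. -/
def gram {L N : ℕ} (K : Matrix (Fin L) (Fin N) ℂ) (S : Finset (Fin N)) :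
    Matrix {j : Fin N // j ∈ S} {j : Fin N // j ∈ S} ℂ := (subMat K S)ᴴ * subMat K S

/-- The vector `(K_Sᴴ K_S)⁻¹ K_Sᴴ k_j`. -/
def ercVec {L N : ℕ} (K : Matrix (Fin L) (Fin N) ℂ) (S : Finset (Fin N)) (j : Fin N) :
    {i : Fin N // i ∈ S} → ℂ := ((gram K S)⁻¹ * (subMat K S)ᴴ) *ᵥ colK K j

/-- The ℓ1 norm of a complex vector, as a real number. -/
def l1 {ι : Type} [Fintype ι] (v : ι → ℂ) : ℝ := ∑ i, ‖v i‖

/-- The ℓ1 norm of a complex vector, as a nonnegative real number. -/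
def l1n {ι : Type} [Fintype ι] (v : ι → ℂ) : NNReal := ∑ i, ‖v i‖₊

/-! If `x` is supported on `S` and `K z = K x`, then `h = z - x` lies in the kernel of `K`, so
`K_S h_S = -∑_{j ∉ S} h_j k_j`; applying the left inverse `(K_Sᴴ K_S)⁻¹ K_Sᴴ` of `K_S` gives
`h_S = -∑_{j ∉ S} h_j (K_Sᴴ K_S)⁻¹ K_Sᴴ k_j`. Since each of these vectors has ℓ1 norm below `1`,
`‖h_S‖₁ < ‖h_{Sᶜ}‖₁` unless `h = 0` (null space property), and then
`‖z‖₁ ≥ ‖x‖₁ - ‖h_S‖₁ + ‖h_{Sᶜ}‖₁ > ‖x‖₁`. -/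

section L1

variable {ι : Type} [Fintype ι]

lemma l1_neg (v : ι → ℂ) : l1 (-v) = l1 v := by
  simp [l1]

lemma l1_smul (c : ℂ) (v : ι → ℂ) : l1 (c • v) = ‖c‖ * l1 v := by
  simp [l1, Finset.mul_sum]

lemma l1_sum_le {α : Type} (s : Finset α) (v : α → ι → ℂ) :
    l1 (∑ a ∈ s, v a) ≤ ∑ a ∈ s, l1 (v a) := by
  simp only [l1, Finset.sum_apply]
  calc ∑ i, ‖∑ a ∈ s, v a i‖ ≤ ∑ i, ∑ a ∈ s, ‖v a i‖ :=
        Finset.sum_le_sum fun i _ => norm_sum_le _ _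
    _ = ∑ a ∈ s, ∑ i, ‖v a i‖ := Finset.sum_comm

lemma l1_lt_l1_add_of_sum_norm_lt_sum_norm_compl [DecidableEq ι] {S : Finset ι} {x h : ι → ℂ}
    (hx : ∀ j ∉ S, x j = 0) (hh : ∑ j ∈ S, ‖h j‖ < ∑ j ∈ Sᶜ, ‖h j‖) :
    l1 x < l1 (x + h) := by
  have hxS : l1 x = ∑ j ∈ S, ‖x j‖ := by
    refine (Finset.sum_subset (Finset.subset_univ S) fun j _ hj => ?_).symm
    rw [hx j hj, norm_zero]
  have hxh : l1 (x + h) = ∑ j ∈ S, ‖x j + h j‖ + ∑ j ∈ Sᶜ, ‖h j‖ := by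
    rw [l1, ← Finset.sum_add_sum_compl S]
    congr 1
    exact Finset.sum_congr rfl fun j hj => by
      rw [Pi.add_apply, hx j (Finset.mem_compl.mp hj), zero_add]
  have hS : ∑ j ∈ S, ‖x j‖ ≤ ∑ j ∈ S, ‖x j + h j‖ + ∑ j ∈ S, ‖h j‖ := by
    rw [← Finset.sum_add_distrib]
    exact Finset.sum_le_sum fun j _ => by
      simpa using norm_sub_le (x j + h j) (h j)
  rw [hxS, hxh]
  linarith

end L1

section Dictionary

variable {L N : ℕ} (K : Matrix (Fin L) (Fin N) ℂ) (S : Finset (Fin N))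

lemma mulVec_eq_subMat_mulVec_add_sum_compl (h : Fin N → ℂ) :
    K *ᵥ h = subMat K S *ᵥ (fun i => h i) + ∑ j ∈ Sᶜ, h j • colK K j := by
  ext l
  simp only [Matrix.mulVec, dotProduct, subMat, colK, Matrix.of_apply, Pi.add_apply,
    Finset.sum_apply, Pi.smul_apply, smul_eq_mul]
  rw [Finset.sum_coe_sort S fun j => K l j * h j, ← Finset.sum_add_sum_compl S]
  simp only [mul_comm]

lemma gram_inv_mul_conjTranspose_mul_subMat (hinv : IsUnit (gram K S)) :
    ((gram K S)⁻¹ * (subMat K S)ᴴ) * subMat K S = 1 := by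
  rw [Matrix.mul_assoc]
  exact Matrix.nonsing_inv_mul _ ((Matrix.isUnit_iff_isUnit_det _).mp hinv)

lemma restrict_eq_neg_sum_ercVec_of_mulVec_eq_zero (hinv : IsUnit (gram K S))
    {h : Fin N → ℂ} (hKh : K *ᵥ h = 0) :
    (fun i : {i // i ∈ S} => h i) = -∑ j ∈ Sᶜ, h j • ercVec K S j := by
  have hM := congrArg (((gram K S)⁻¹ * (subMat K S)ᴴ) *ᵥ ·) hKh
  simp only [mulVec_eq_subMat_mulVec_add_sum_compl K S, Matrix.mulVec_add, Matrix.mulVec_mulVec,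
    gram_inv_mul_conjTranspose_mul_subMat K S hinv, Matrix.one_mulVec, Matrix.mulVec_sum,
    Matrix.mulVec_smul, Matrix.mulVec_zero] at hM
  exact eq_neg_of_add_eq_zero_left hM

lemma sum_norm_lt_sum_norm_compl_of_mulVec_eq_zero (hinv : IsUnit (gram K S))
    (hERC : ∀ j ∉ S, l1 (ercVec K S j) < 1) {h : Fin N → ℂ} (hKh : K *ᵥ h = 0) (hh : h ≠ 0) :
    ∑ j ∈ S, ‖h j‖ < ∑ j ∈ Sᶜ, ‖h j‖ := by
  have hS := restrict_eq_neg_sum_ercVec_of_mulVec_eq_zero K S hinv hKh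
  obtain ⟨j₀, hj₀, hhj₀⟩ : ∃ j ∈ Sᶜ, h j ≠ 0 := by
    by_contra! hoff
    refine hh (funext fun j => ?_)
    by_cases hj : j ∈ S
    · rw [Finset.sum_eq_zero fun j hj => by rw [hoff j hj, zero_smul], neg_zero] at hS
      simpa using congrFun hS ⟨j, hj⟩
    · exact hoff j (Finset.mem_compl.mpr hj)
  calc ∑ j ∈ S, ‖h j‖ = l1 (fun i : {i // i ∈ S} => h i) := (Finset.sum_coe_sort S _).symm
    _ ≤ ∑ j ∈ Sᶜ, ‖h j‖ * l1 (ercVec K S j) := by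
        rw [hS, l1_neg]
        exact (l1_sum_le _ _).trans_eq (Finset.sum_congr rfl fun j _ => l1_smul _ _)
    _ < ∑ j ∈ Sᶜ, ‖h j‖ := by
        refine Finset.sum_lt_sum (fun j hj => ?_) ⟨j₀, hj₀, ?_⟩
        · exact mul_le_of_le_one_right (norm_nonneg _) (hERC j (Finset.mem_compl.mp hj)).le
        · exact mul_lt_of_lt_one_right (norm_pos_iff.mpr hhj₀)
            (hERC j₀ (Finset.mem_compl.mp hj₀))

end Dictionary

theorem stmt0_general (L N : ℕ)
    (K : Matrix (Fin L) (Fin N) ℂ)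
    (S : Finset (Fin N))
    (hinv : IsUnit (gram K S))
    (hERC : ∀ j ∉ S, l1 (ercVec K S j) < 1)
    (x : Fin N → ℂ) (hx : ∀ j ∉ S, x j = 0) :
    ∀ z : Fin N → ℂ, K *ᵥ z = K *ᵥ x → z ≠ x → l1 x < l1 z := by
  intro z hz hne
  have hKh : K *ᵥ (z - x) = 0 := by rw [Matrix.mulVec_sub, hz, sub_self]
  have hnsp := sum_norm_lt_sum_norm_compl_of_mulVec_eq_zero K S hinv hERC hKh (sub_ne_zero.mpr hne)
  simpa using l1_lt_l1_add_of_sum_norm_lt_sum_norm_compl hx hnsp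

/-- basis-pursuit part of Lemma 1: if the Gram matrix `K_Sᴴ K_S` is
invertible and the exact-recovery constant `max_{j ∉ S} ‖(K_Sᴴ K_S)⁻¹ K_Sᴴ k_j‖₁` is
smaller than `1`, then every `x` supported on `S` is the unique ℓ1 minimizer for the
observation `y = K x`. -/
theorem stmt0 (L N : ℕ) (hL : 1 ≤ L) (hN : 1 ≤ N)
    (K : Matrix (Fin L) (Fin N) ℂ)
    (hunit : ∀ j : Fin N, ∑ l, ‖K l j‖ ^ 2 = 1)
    (S : Finset (Fin N))
    (hinv : IsUnit (gram K S))
    (hERC : ∀ j ∉ S, l1 (ercVec K S j) < 1)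
    (x : Fin N → ℂ) (hx : ∀ j ∉ S, x j = 0) :
    ∀ z : Fin N → ℂ, K *ᵥ z = K *ᵥ x → z ≠ x → l1 x < l1 z :=
  stmt0_general L N K S hinv hERC x hx
end
end

section
/- Suppose the Gram matrix K_S^H K_S is invertible and max_{j∉S} ‖(K_S^H K_S)^{-1} K_S^H k_j‖₁ < 1. Then for every nonzero vector r lying in the column space of K_S, max_{j∉S} |⟨k_j, r⟩| < max_{i∈S} |⟨k_i, r⟩|; in particular, a greedy step that selects an atom maximizing |⟨k_i, r⟩| always selects an atom from S. -/
open Matrix Finset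

noncomputable section

/-! The coefficient vector `x_j = (K_Sᴴ K_S)⁻¹ K_Sᴴ k_j` satisfies `K_Sᴴ K_S x_j = K_Sᴴ k_j`, so for
`r = K_S c` in the column space of `K_S` we get `⟨k_j, r⟩ = ⟨K_S x_j, r⟩ = ∑_{i ∈ S} conj (x_j i) ⟨k_i, r⟩`.
Hence `|⟨k_j, r⟩| ≤ ‖x_j‖₁ · max_{i ∈ S} |⟨k_i, r⟩|`, which is strictly smaller than the maximum over `S`
as soon as `‖x_j‖₁ < 1` and that maximum is positive; it is, because `K_Sᴴ r = 0` would force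
`⟨r, r⟩ = ⟨c, K_Sᴴ r⟩ = 0`. -/

theorem ipC_eq_star_dotProduct {L : ℕ} (u v : Fin L → ℂ) : ipC u v = star u ⬝ᵥ v := rfl

theorem subMat_conjTranspose_mulVec {L N : ℕ} (K : Matrix (Fin L) (Fin N) ℂ) (S : Finset (Fin N))
    (r : Fin L → ℂ) : (subMat K S)ᴴ *ᵥ r = fun i : {i : Fin N // i ∈ S} => ipC (colK K i) r := by
  ext i
  simp [ipC, colK, subMat, mulVec, dotProduct]

theorem gram_conjTranspose {L N : ℕ} (K : Matrix (Fin L) (Fin N) ℂ) (S : Finset (Fin N)) :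
    (gram K S)ᴴ = gram K S := by
  rw [_root_.gram, conjTranspose_mul, conjTranspose_conjTranspose]

theorem gram_mulVec_ercVec {L N : ℕ} {K : Matrix (Fin L) (Fin N) ℂ} {S : Finset (Fin N)}
    (hinv : IsUnit (gram K S)) (j : Fin N) :
    gram K S *ᵥ ercVec K S j = (subMat K S)ᴴ *ᵥ colK K j := by
  rw [ercVec, mulVec_mulVec, ← Matrix.mul_assoc,
    mul_nonsing_inv _ ((isUnit_iff_isUnit_det _).mp hinv), Matrix.one_mul]

theorem ipC_eq_star_ercVec_dotProduct {L N : ℕ} {K : Matrix (Fin L) (Fin N) ℂ}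
    {S : Finset (Fin N)} (hinv : IsUnit (gram K S)) (c : {i : Fin N // i ∈ S} → ℂ) (j : Fin N) :
    ipC (colK K j) (subMat K S *ᵥ c) =
      star (ercVec K S j) ⬝ᵥ fun i : {i : Fin N // i ∈ S} => ipC (colK K i) (subMat K S *ᵥ c) := by
  rw [← subMat_conjTranspose_mulVec, mulVec_mulVec, ← _root_.gram, dotProduct_mulVec,
    ← gram_conjTranspose, ← star_mulVec, gram_mulVec_ercVec hinv, star_mulVec,
    conjTranspose_conjTranspose, ← dotProduct_mulVec, ipC_eq_star_dotProduct]

open scoped ComplexOrder in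
theorem exists_ipC_ne_zero_of_mulVec_ne_zero {L N : ℕ} (K : Matrix (Fin L) (Fin N) ℂ)
    (S : Finset (Fin N)) (c : {i : Fin N // i ∈ S} → ℂ) (hr0 : subMat K S *ᵥ c ≠ 0) :
    ∃ i ∈ S, ipC (colK K i) (subMat K S *ᵥ c) ≠ 0 := by
  by_contra! h
  have hA : (subMat K S)ᴴ *ᵥ (subMat K S *ᵥ c) = 0 := by
    rw [subMat_conjTranspose_mulVec]
    exact funext fun i => h i i.2
  apply hr0
  rw [← dotProduct_star_self_eq_zero, star_mulVec, ← dotProduct_mulVec, hA, dotProduct_zero]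

theorem sup_nnnorm_ipC_pos {L N : ℕ} (K : Matrix (Fin L) (Fin N) ℂ) (S : Finset (Fin N))
    (c : {i : Fin N // i ∈ S} → ℂ) (hr0 : subMat K S *ᵥ c ≠ 0) :
    0 < S.sup fun i => ‖ipC (colK K i) (subMat K S *ᵥ c)‖₊ := by
  obtain ⟨i, hi, hne⟩ := exists_ipC_ne_zero_of_mulVec_ne_zero K S c hr0
  exact (nnnorm_pos.mpr hne).trans_le
    (Finset.le_sup (f := fun i => ‖ipC (colK K i) (subMat K S *ᵥ c)‖₊) hi)

theorem norm_star_dotProduct_le_l1_mul {ι : Type} [Fintype ι] (x v : ι → ℂ) {M : ℝ}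
    (hv : ∀ i, ‖v i‖ ≤ M) : ‖star x ⬝ᵥ v‖ ≤ l1 x * M :=
  calc ‖star x ⬝ᵥ v‖ ≤ ∑ i, ‖x i‖ * ‖v i‖ := by
        simpa only [dotProduct, Pi.star_apply, norm_mul, norm_star] using
          norm_sum_le Finset.univ fun i => star (x i) * v i
    _ ≤ ∑ i, ‖x i‖ * M := by gcongr with i; exact hv i
    _ = l1 x * M := by rw [l1, Finset.sum_mul]

theorem nnnorm_ipC_lt_sup_of_notMem {L N : ℕ} {K : Matrix (Fin L) (Fin N) ℂ}
    {S : Finset (Fin N)} (hinv : IsUnit (gram K S)) {j : Fin N} (hj : l1 (ercVec K S j) < 1)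
    (c : {i : Fin N // i ∈ S} → ℂ) (hr0 : subMat K S *ᵥ c ≠ 0) :
    ‖ipC (colK K j) (subMat K S *ᵥ c)‖₊ < S.sup fun i => ‖ipC (colK K i) (subMat K S *ᵥ c)‖₊ := by
  set f := fun i => ‖ipC (colK K i) (subMat K S *ᵥ c)‖₊
  have hpos : (0 : ℝ) < S.sup f := NNReal.coe_pos.mpr (sup_nnnorm_ipC_pos K S c hr0)
  have hle : ‖ipC (colK K j) (subMat K S *ᵥ c)‖ ≤ l1 (ercVec K S j) * S.sup f := by
    rw [ipC_eq_star_ercVec_dotProduct hinv]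
    exact norm_star_dotProduct_le_l1_mul _ _ fun i =>
      NNReal.coe_le_coe.mpr (Finset.le_sup (f := f) i.2)
  rw [← NNReal.coe_lt_coe, coe_nnnorm]
  exact hle.trans_lt (mul_lt_of_lt_one_left hpos hj)

theorem stmt2_general (L N : ℕ)
    (K : Matrix (Fin L) (Fin N) ℂ)
    (S : Finset (Fin N))
    (hinv : IsUnit (gram K S))
    (hERC : ∀ j ∉ S, l1 (ercVec K S j) < 1)
    (r : Fin L → ℂ) (hr : ∃ c : {i : Fin N // i ∈ S} → ℂ, r = subMat K S *ᵥ c)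
    (hr0 : r ≠ 0) :
    ((Sᶜ.sup fun j => ‖ipC (colK K j) r‖₊ : NNReal) : ℝ)
      < ((S.sup fun i => ‖ipC (colK K i) r‖₊ : NNReal) : ℝ) ∧
    ∀ j : Fin N, (∀ i : Fin N, ‖ipC (colK K i) r‖ ≤ ‖ipC (colK K j) r‖) → j ∈ S := by
  obtain ⟨c, rfl⟩ := hr
  have hlt : ∀ j ∉ S, ‖ipC (colK K j) (subMat K S *ᵥ c)‖₊ <
      S.sup fun i => ‖ipC (colK K i) (subMat K S *ᵥ c)‖₊ :=
    fun j hj => nnnorm_ipC_lt_sup_of_notMem hinv (hERC j hj) c hr0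
  refine ⟨NNReal.coe_lt_coe.mpr ?_, fun j hmax => ?_⟩
  · exact (Finset.sup_lt_iff (sup_nnnorm_ipC_pos K S c hr0)).mpr fun j hj =>
      hlt j (mem_compl.mp hj)
  · by_contra hj
    exact (hlt j hj).not_ge (Finset.sup_le fun i _ => hmax i)

/-- atom-selection correctness in Lemma 1: if `K_Sᴴ K_S` is invertible
and `max_{j ∉ S} ‖(K_Sᴴ K_S)⁻¹ K_Sᴴ k_j‖₁ < 1`, then for every nonzero `r` in the column
space of `K_S` we have `max_{j ∉ S} |⟨k_j, r⟩| < max_{i ∈ S} |⟨k_i, r⟩|`; in particular any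
atom maximizing `|⟨k_i, r⟩|` over all atoms belongs to `S`. -/
theorem stmt2 (L N : ℕ) (hL : 1 ≤ L) (hN : 1 ≤ N)
    (K : Matrix (Fin L) (Fin N) ℂ)
    (hunit : ∀ j : Fin N, ∑ l, ‖K l j‖ ^ 2 = 1)
    (S : Finset (Fin N))
    (hinv : IsUnit (gram K S))
    (hERC : ∀ j ∉ S, l1 (ercVec K S j) < 1)
    (r : Fin L → ℂ) (hr : ∃ c : {i : Fin N // i ∈ S} → ℂ, r = subMat K S *ᵥ c)
    (hr0 : r ≠ 0) :
    ((Sᶜ.sup fun j => ‖ipC (colK K j) r‖₊ : NNReal) : ℝ)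
      < ((S.sup fun i => ‖ipC (colK K i) r‖₊ : NNReal) : ℝ) ∧
    ∀ j : Fin N, (∀ i : Fin N, ‖ipC (colK K i) r‖ ≤ ‖ipC (colK K j) r‖) → j ∈ S :=
  stmt2_general L N K S hinv hERC r hr hr0
end
end

section
/- Let K be a real L×N matrix whose columns have unit Euclidean norm and S ⊆ {1,…,N} an index set with ζ_S + ν_S < 1. Let M := max_{j∉S} ‖(K_S^T K_S)^{-1} K_S^T k_j‖₁ be the exact-recovery constant of S and λ_min the minimum eigenvalue of K_S^T K_S. Then (1 − M)·λ_min ≥ (1 − ζ_S − ν_S)(1 − ν_S) > 0; consequently, if ε > 0 and |x_i| ≥ 2ε/((1 − ζ_S − ν_S)(1 − ν_S)) for some coefficient x_i, then also |x_i| ≥ 2ε/((1 − M)·λ_min). -/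
/-! The Gram matrix `G = K_Sᵀ K_S` has unit diagonal and off-diagonal row (and, by symmetry,
column) sums of absolute values at most `ν_S`. Gershgorin's theorem puts every eigenvalue of `G`
within `ν_S` of `1`, so `λ_min ≥ 1 - ν_S`, and `G` is invertible. For `j ∉ S` the vector
`v = G⁻¹ K_Sᵀ k_j` solves `G v = (⟨k_i, k_j⟩)_{i ∈ S}`, whose `ℓ¹` norm is at most `ζ_S`;
writing `v = G v - (G - 1) v` gives `‖v‖₁ ≤ ζ_S + ν_S ‖v‖₁`, i.e. `M (1 - ν_S) ≤ ζ_S`. Hence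
`(1 - M) λ_min ≥ (1 - M)(1 - ν_S) ≥ 1 - ζ_S - ν_S ≥ (1 - ζ_S - ν_S)(1 - ν_S)`. -/

open Matrix Finset

noncomputable section

/-- The standard inner product `⟨u,v⟩ = ∑ l, u l * v l` on `ℝ^L`. -/
def ipR {L : ℕ} (u v : Fin L → ℝ) : ℝ := ∑ l, u l * v l

/-- The `j`-th column `k_j` of the dictionary `K`. -/
def colR {L N : ℕ} (K : Matrix (Fin L) (Fin N) ℝ) (j : Fin N) : Fin L → ℝ := fun l => K l j

/-- The submatrix `K_S` of the columns of `K` indexed by `S`. -/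
def subMatR {L N : ℕ} (K : Matrix (Fin L) (Fin N) ℝ) (S : Finset (Fin N)) :
    Matrix (Fin L) {j : Fin N // j ∈ S} ℝ := Matrix.of fun l j => K l j.1

/-- The Gram matrix `K_Sᵀ K_S`. -/
def gramR {L N : ℕ} (K : Matrix (Fin L) (Fin N) ℝ) (S : Finset (Fin N)) :
    Matrix {j : Fin N // j ∈ S} {j : Fin N // j ∈ S} ℝ := (subMatR K S)ᵀ * subMatR K S

/-- The vector `(K_Sᵀ K_S)⁻¹ K_Sᵀ k_j`. -/
def ercVecR {L N : ℕ} (K : Matrix (Fin L) (Fin N) ℝ) (S : Finset (Fin N)) (j : Fin N) :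
    {i : Fin N // i ∈ S} → ℝ := ((gramR K S)⁻¹ * (subMatR K S)ᵀ) *ᵥ colR K j

/-- The ℓ1 norm of a real vector, as a nonnegative real number. -/
def l1nR {ι : Type} [Fintype ι] (v : ι → ℝ) : NNReal := ∑ i, ‖v i‖₊

section DiagonallyDominant

variable {n : Type*} [Fintype n] [DecidableEq n]

theorem sum_sum_erase_comm {M : Type*} [AddCommMonoid M] (f : n → n → M) :
    ∑ i, ∑ j ∈ univ.erase i, f i j = ∑ j, ∑ i ∈ univ.erase j, f i j :=
  sum_comm' fun i j => by simp [ne_comm]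

theorem one_sub_mul_sum_norm_le_sum_norm_mulVec {R : Type*} [NormedRing R] {A : Matrix n n R}
    {ν : ℝ} (hdiag : ∀ i, A i i = 1) (hcol : ∀ j, ∑ i ∈ univ.erase j, ‖A i j‖ ≤ ν)
    (v : n → R) : (1 - ν) * ∑ i, ‖v i‖ ≤ ∑ i, ‖(A *ᵥ v) i‖ := by
  have hrow : ∀ i, ‖v i‖ ≤ ‖(A *ᵥ v) i‖ + ∑ j ∈ univ.erase i, ‖A i j‖ * ‖v j‖ := by
    intro i
    have hsplit : (A *ᵥ v) i = v i + ∑ j ∈ univ.erase i, A i j * v j := by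
      rw [mulVec, dotProduct, ← add_sum_erase _ _ (mem_univ i), hdiag, one_mul]
    calc ‖v i‖ = ‖(A *ᵥ v) i - ∑ j ∈ univ.erase i, A i j * v j‖ := by
          rw [hsplit, add_sub_cancel_right]
      _ ≤ ‖(A *ᵥ v) i‖ + ‖∑ j ∈ univ.erase i, A i j * v j‖ := norm_sub_le _ _
      _ ≤ _ := by
          gcongr
          exact (norm_sum_le _ _).trans (sum_le_sum fun j _ => norm_mul_le _ _)
  have hoff : ∑ i, ∑ j ∈ univ.erase i, ‖A i j‖ * ‖v j‖ ≤ ν * ∑ j, ‖v j‖ := by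
    rw [sum_sum_erase_comm, mul_sum]
    refine sum_le_sum fun j _ => ?_
    rw [← sum_mul]
    exact mul_le_mul_of_nonneg_right (hcol j) (norm_nonneg _)
  have hsum := sum_le_sum fun i (_ : i ∈ univ) => hrow i
  rw [sum_add_distrib] at hsum
  linarith

end DiagonallyDominant

theorem NNReal.coe_finset_sup_le {α : Type*} {s : Finset α} {f : α → NNReal} {c : ℝ}
    (hc : 0 ≤ c) (h : ∀ a ∈ s, (f a : ℝ) ≤ c) : ((s.sup f : NNReal) : ℝ) ≤ c := by
  rw [← Real.coe_toNNReal c hc, NNReal.coe_le_coe]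
  exact Finset.sup_le fun a ha => by rw [← NNReal.coe_le_coe, Real.coe_toNNReal c hc]; exact h a ha

theorem ipR_comm {L : ℕ} (u v : Fin L → ℝ) : ipR u v = ipR v u :=
  sum_congr rfl fun _ _ => mul_comm _ _

theorem coe_l1nR {ι : Type} [Fintype ι] (v : ι → ℝ) : (l1nR v : ℝ) = ∑ i, ‖v i‖ := by
  simp [l1nR]

section Coherence

variable {L N : ℕ} (K : Matrix (Fin L) (Fin N) ℝ) (S : Finset (Fin N))

def interCoherence : ℝ :=
  ((Sᶜ.sup fun i => ∑ j ∈ S, ‖ipR (colR K i) (colR K j)‖₊ : NNReal) : ℝ)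

def intraCoherence : ℝ :=
  ((S.sup fun i => ∑ j ∈ S.erase i, ‖ipR (colR K i) (colR K j)‖₊ : NNReal) : ℝ)

def ercConst : ℝ := ((Sᶜ.sup fun j => l1nR (ercVecR K S j) : NNReal) : ℝ)

theorem interCoherence_nonneg : 0 ≤ interCoherence K S := NNReal.coe_nonneg _

theorem intraCoherence_nonneg : 0 ≤ intraCoherence K S := NNReal.coe_nonneg _

theorem gramR_apply (i j : S) : gramR K S i j = ipR (colR K i) (colR K j) := by
  simp [gramR, mul_apply, subMatR, ipR, colR]

theorem gramR_apply_comm (i j : S) : gramR K S i j = gramR K S j i := by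
  rw [gramR_apply, gramR_apply, ipR_comm]

variable {K} in
theorem gramR_apply_self (hunit : ∀ j, ∑ l, K l j ^ 2 = 1) (i : S) : gramR K S i i = 1 := by
  simpa [gramR_apply, ipR, colR, sq] using hunit i

theorem sum_norm_ipR_le_interCoherence {i : Fin N} (hi : i ∉ S) :
    ∑ j ∈ S, ‖ipR (colR K i) (colR K j)‖ ≤ interCoherence K S := by
  have := NNReal.coe_le_coe.mpr
    (le_sup (f := fun i => ∑ j ∈ S, ‖ipR (colR K i) (colR K j)‖₊) (mem_compl.mpr hi))
  simpa [interCoherence] using this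

theorem sum_erase_norm_gramR_le_intraCoherence (i : S) :
    ∑ j ∈ univ.erase i, ‖gramR K S i j‖ ≤ intraCoherence K S := by
  have := NNReal.coe_le_coe.mpr
    (le_sup (f := fun i => ∑ j ∈ S.erase i, ‖ipR (colR K i) (colR K j)‖₊) i.2)
  push_cast at this
  simp only [gramR_apply]
  rwa [sum_erase_eq_sub (mem_univ i), sum_coe_sort S fun j => ‖ipR (colR K i) (colR K j)‖,
    ← sum_erase_eq_sub i.2]

end Coherence

section GramBounds

variable {L N : ℕ} {K : Matrix (Fin L) (Fin N) ℝ} {S : Finset (Fin N)}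

theorem det_gramR_ne_zero (hunit : ∀ j, ∑ l, K l j ^ 2 = 1) (hν : intraCoherence K S < 1) :
    (gramR K S).det ≠ 0 :=
  det_ne_zero_of_sum_row_lt_diag fun i => by
    rw [gramR_apply_self S hunit, norm_one]
    exact (sum_erase_norm_gramR_le_intraCoherence K S i).trans_lt hν

theorem one_sub_intraCoherence_le_of_mulVec_eq_smul (hunit : ∀ j, ∑ l, K l j ^ 2 = 1) {μ : ℝ}
    {v : S → ℝ} (hv : v ≠ 0) (hμ : gramR K S *ᵥ v = μ • v) : 1 - intraCoherence K S ≤ μ := by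
  have heigen : Module.End.HasEigenvalue (toLin' (gramR K S)) μ :=
    Module.End.hasEigenvalue_of_hasEigenvector
      ⟨Module.End.mem_eigenspace_iff.mpr (by simpa using hμ), hv⟩
  obtain ⟨i, hi⟩ := eigenvalue_mem_ball heigen
  rw [Metric.mem_closedBall, gramR_apply_self S hunit, Real.dist_eq] at hi
  have hradius := sum_erase_norm_gramR_le_intraCoherence K S i
  linarith [neg_abs_le (μ - 1)]

theorem gramR_mulVec_ercVecR (hdet : (gramR K S).det ≠ 0) (j : Fin N) :
    gramR K S *ᵥ ercVecR K S j = fun i : S => ipR (colR K i) (colR K j) := by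
  unfold ercVecR
  rw [mulVec_mulVec, ← Matrix.mul_assoc, mul_nonsing_inv _ hdet.isUnit, Matrix.one_mul]
  ext i
  simp [mulVec, dotProduct, subMatR, ipR, colR]

theorem l1nR_ercVecR_mul_le (hunit : ∀ j, ∑ l, K l j ^ 2 = 1) (hν : intraCoherence K S < 1)
    {j : Fin N} (hj : j ∉ S) :
    (l1nR (ercVecR K S j) : ℝ) * (1 - intraCoherence K S) ≤ interCoherence K S := by
  have hcol (j : S) : ∑ i ∈ univ.erase j, ‖gramR K S i j‖ ≤ intraCoherence K S := by
    simpa only [gramR_apply_comm K S _ j] using sum_erase_norm_gramR_le_intraCoherence K S j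
  have h := one_sub_mul_sum_norm_le_sum_norm_mulVec (gramR_apply_self S hunit) hcol (ercVecR K S j)
  rw [gramR_mulVec_ercVecR (det_gramR_ne_zero hunit hν)] at h
  have hζ : ∑ i : S, ‖ipR (colR K i) (colR K j)‖ ≤ interCoherence K S := by
    simpa only [ipR_comm _ (colR K j), sum_coe_sort S fun i => ‖ipR (colR K j) (colR K i)‖]
      using sum_norm_ipR_le_interCoherence K S hj
  rw [coe_l1nR, mul_comm]
  exact h.trans hζ

theorem ercConst_mul_le (hunit : ∀ j, ∑ l, K l j ^ 2 = 1) (hν : intraCoherence K S < 1) :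
    ercConst K S * (1 - intraCoherence K S) ≤ interCoherence K S := by
  have hpos : 0 < 1 - intraCoherence K S := sub_pos.mpr hν
  rw [← le_div_iff₀ hpos]
  refine NNReal.coe_finset_sup_le (div_nonneg (NNReal.coe_nonneg _) hpos.le) fun j hj => ?_
  rw [le_div_iff₀ hpos]
  exact l1nR_ercVecR_mul_le hunit hν (mem_compl.mp hj)

end GramBounds

theorem one_sub_sub_mul_le_of_coherence {ζ ν M μ : ℝ} (hζ : 0 ≤ ζ) (hν : 0 ≤ ν) (h1 : ζ + ν < 1)
    (hM : M * (1 - ν) ≤ ζ) (hμ : 1 - ν ≤ μ) :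
    (1 - ζ - ν) * (1 - ν) ≤ (1 - M) * μ ∧ 0 < (1 - ζ - ν) * (1 - ν) := by
  have hM1 : 0 ≤ 1 - M := by nlinarith
  constructor <;> nlinarith [mul_le_mul_of_nonneg_left hμ hM1]

theorem stmt9_general (L N : ℕ)
    (K : Matrix (Fin L) (Fin N) ℝ)
    (hunit : ∀ j : Fin N, ∑ l, (K l j) ^ 2 = 1)
    (S : Finset (Fin N))
    (ζ : ℝ)
    (hζ : ζ = ((Sᶜ.sup fun i => ∑ j ∈ S, ‖ipR (colR K i) (colR K j)‖₊ : NNReal) : ℝ))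
    (ν : ℝ)
    (hν : ν = ((S.sup fun i => ∑ j ∈ S.erase i, ‖ipR (colR K i) (colR K j)‖₊ : NNReal) : ℝ))
    (h1 : ζ + ν < 1)
    (M : ℝ) (hM : M = ((Sᶜ.sup fun j => l1nR (ercVecR K S j) : NNReal) : ℝ))
    (lmin : ℝ)
    (hlmin : ∃ v : {i : Fin N // i ∈ S} → ℝ, v ≠ 0 ∧ gramR K S *ᵥ v = lmin • v) :
    ((1 - ζ - ν) * (1 - ν) ≤ (1 - M) * lmin ∧ 0 < (1 - ζ - ν) * (1 - ν)) ∧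
    ∀ ε : ℝ, 0 < ε → ∀ xi : ℝ,
      2 * ε / ((1 - ζ - ν) * (1 - ν)) ≤ |xi| → 2 * ε / ((1 - M) * lmin) ≤ |xi| := by
  change ζ = interCoherence K S at hζ
  change ν = intraCoherence K S at hν
  change M = ercConst K S at hM
  subst hζ hν hM
  obtain ⟨v, hv, hlmin⟩ := hlmin
  have hν1 : intraCoherence K S < 1 := by linarith [interCoherence_nonneg K S]
  have hbound := one_sub_sub_mul_le_of_coherence (interCoherence_nonneg K S)
    (intraCoherence_nonneg K S) h1 (ercConst_mul_le hunit hν1) (one_sub_intraCoherence_le_of_mulVec_eq_smul hunit hv hlmin)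
  exact ⟨hbound, fun ε hε xi hxi =>
    (div_le_div_of_nonneg_left (by positivity) hbound.2 hbound.1).trans hxi⟩

/-- quantitative content of Theorem 3: if `ζ_S + ν_S < 1`, `M` is the
exact-recovery constant of `S` and `λ_min` the minimum eigenvalue of `K_Sᵀ K_S`, then
`(1 - M)·λ_min ≥ (1 - ζ_S - ν_S)(1 - ν_S) > 0`; consequently, for any `ε > 0`, a
coefficient with `|x_i| ≥ 2ε/((1 - ζ_S - ν_S)(1 - ν_S))` also satisfies
`|x_i| ≥ 2ε/((1 - M)·λ_min)`. -/
theorem stmt9 (L N : ℕ) (hL : 1 ≤ L) (hN : 1 ≤ N)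
    (K : Matrix (Fin L) (Fin N) ℝ)
    (hunit : ∀ j : Fin N, ∑ l, (K l j) ^ 2 = 1)
    (S : Finset (Fin N))
    (ζ : ℝ)
    (hζ : ζ = ((Sᶜ.sup fun i => ∑ j ∈ S, ‖ipR (colR K i) (colR K j)‖₊ : NNReal) : ℝ))
    (ν : ℝ)
    (hν : ν = ((S.sup fun i => ∑ j ∈ S.erase i, ‖ipR (colR K i) (colR K j)‖₊ : NNReal) : ℝ))
    (h1 : ζ + ν < 1)
    (M : ℝ) (hM : M = ((Sᶜ.sup fun j => l1nR (ercVecR K S j) : NNReal) : ℝ))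
    (lmin : ℝ)
    (hlmin : ∃ v : {i : Fin N // i ∈ S} → ℝ, v ≠ 0 ∧ gramR K S *ᵥ v = lmin • v)
    (hlminMin : ∀ (μ : ℝ) (v : {i : Fin N // i ∈ S} → ℝ),
        v ≠ 0 → gramR K S *ᵥ v = μ • v → lmin ≤ μ) :
    ((1 - ζ - ν) * (1 - ν) ≤ (1 - M) * lmin ∧ 0 < (1 - ζ - ν) * (1 - ν)) ∧
    ∀ ε : ℝ, 0 < ε → ∀ xi : ℝ,
      2 * ε / ((1 - ζ - ν) * (1 - ν)) ≤ |xi| → 2 * ε / ((1 - M) * lmin) ≤ |xi| :=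
  stmt9_general L N K hunit S ζ hζ ν hν h1 M hM lmin hlmin
end
end
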